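/- Let u ∈ ℂ, α, β ∈ ℝ with β² - |u|² ≥ 0, Ω₁ = √(β² - |u|²), and M = [[-iΩ₁, i·conj(u)],[iu, iΩ₁]]. Define K(λ) = ((λ² - α² - β²)I + 2λM) / ((λ + α + iβ)(λ - α + iβ)). Then K(λ)K(-λ) = I for all λ where the denominators are nonzero. -/

import Mathlib

open Complex Matrix
open ComplexConjugate

/-! `K(λ)` is a scalar multiple of `(λ² - α² - β²) + 2λM`, and `M² = -(Ω₁² + |u|²) = -β²`.
Hence `K(λ)K(-λ)` is the scalar `(λ² - α² - β²)² + 4λ²β²` divided by the product of the four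
factors `±λ ± α + iβ`, and these two agree. -/

theorem smul_one_add_smul_mul_smul_one_sub_smul {R A : Type*} [CommRing R] [Ring A]
    [Algebra R A] {M : A} {c : R} (hM : M * M = c • (1 : A)) (p q : R) :
    (p • (1 : A) + q • M) * (p • (1 : A) - q • M) = (p ^ 2 - q ^ 2 * c) • (1 : A) := by
  simp only [add_mul, mul_sub, smul_mul_assoc, mul_smul_comm, smul_smul, one_mul, mul_one, hM]
  module

theorem mul_self_eq_neg_sq_add_normSq_smul_one (w u : ℂ) :
    !![-I * w, I * conj u; I * u, I * w] * !![-I * w, I * conj u; I * u, I * w] =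
      (-(w ^ 2 + normSq u)) • (1 : Matrix (Fin 2) (Fin 2) ℂ) := by
  rw [mul_fin_two, one_fin_two, smul_of, ← mul_conj]
  simp only [smul_cons, smul_empty, smul_eq_mul, mul_one, mul_zero, EmbeddingLike.apply_eq_iff_eq,
    vecCons_inj, and_true]
  refine ⟨⟨?diag₀, ?off₀⟩, ?off₁, ?diag₁⟩
  case off₀ | off₁ => ring
  all_goals linear_combination (w ^ 2 + u * conj u) * I_sq

theorem prod_signed_add_I_mul_eq_sq_add (l a b : ℂ) :
    (l + a + I * b) * (l - a + I * b) * ((-l + a + I * b) * (-l - a + I * b)) =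
      (l ^ 2 - a ^ 2 - b ^ 2) ^ 2 + 4 * l ^ 2 * b ^ 2 := by
  have hpair (x : ℂ) : (x + I * b) * (-x + I * b) = -(x ^ 2 + b ^ 2) := by
    linear_combination b ^ 2 * I_sq
  calc _ = (l + a + I * b) * (-(l + a) + I * b) * ((l - a + I * b) * (-(l - a) + I * b)) := by
        ring
    _ = _ := by rw [hpair, hpair]; ring

/-- The time-dependent reflection matrix of Example 3 satisfies `K(λ) K(-λ) = I`. -/
theorem stmt_11 (u : ℂ) (α β : ℝ) (h : 0 ≤ β ^ 2 - Complex.normSq u)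
    (Ω₁ : ℝ) (hΩ₁ : Ω₁ = Real.sqrt (β ^ 2 - Complex.normSq u))
    (M : Matrix (Fin 2) (Fin 2) ℂ)
    (hM : M = !![-Complex.I * Ω₁, Complex.I * conj u; Complex.I * u, Complex.I * Ω₁])
    (K : ℂ → Matrix (Fin 2) (Fin 2) ℂ)
    (hK : ∀ lam : ℂ, K lam =
      ((lam + α + Complex.I * β) * (lam - α + Complex.I * β))⁻¹ •
        ((lam ^ 2 - (α : ℂ) ^ 2 - (β : ℂ) ^ 2) • (1 : Matrix (Fin 2) (Fin 2) ℂ) +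
          (2 * lam) • M)) :
    ∀ lam : ℂ, (lam + α + Complex.I * β) * (lam - α + Complex.I * β) ≠ 0 →
      (-lam + α + Complex.I * β) * (-lam - α + Complex.I * β) ≠ 0 →
      K lam * K (-lam) = 1 := by
  intro lam hden hden_neg
  have hΩ₁_sq : (Ω₁ : ℂ) ^ 2 + normSq u = (β : ℂ) ^ 2 := by
    have : Ω₁ ^ 2 + normSq u = β ^ 2 := by rw [hΩ₁, Real.sq_sqrt h]; ring
    exact_mod_cast this
  have hM_sq : M * M = (-(β : ℂ) ^ 2) • (1 : Matrix (Fin 2) (Fin 2) ℂ) := by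
    rw [hM, mul_self_eq_neg_sq_add_normSq_smul_one, hΩ₁_sq]
  have hK_neg : K (-lam) = ((-lam + α + I * β) * (-lam - α + I * β))⁻¹ •
      ((lam ^ 2 - (α : ℂ) ^ 2 - (β : ℂ) ^ 2) • (1 : Matrix (Fin 2) (Fin 2) ℂ) - (2 * lam) • M) := by
    rw [hK, neg_sq, mul_neg, neg_smul, ← sub_eq_add_neg]
  have hquartic : (lam ^ 2 - (α : ℂ) ^ 2 - (β : ℂ) ^ 2) ^ 2 + 4 * lam ^ 2 * (β : ℂ) ^ 2 ≠ 0 := by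
    rw [← prod_signed_add_I_mul_eq_sq_add]
    exact mul_ne_zero hden hden_neg
  rw [hK, hK_neg, smul_mul_smul_comm, smul_one_add_smul_mul_smul_one_sub_smul hM_sq, smul_smul,
    ← mul_inv, prod_signed_add_I_mul_eq_sq_add,
    show (2 * lam) ^ 2 * -(β : ℂ) ^ 2 = -(4 * lam ^ 2 * (β : ℂ) ^ 2) by ring, sub_neg_eq_add,
    inv_mul_cancel₀ hquartic, one_smul]
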